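/- arXiv:1507.06860 — 5 statements merged into one kernel-verified Lean document; each statement's English description precedes it below -/
import Mathlib

section
/- For odd k ≥ 3, the k×k binary matrix M with entries M_{ij} = 1 - δ_{ij} (all ones except zeros on the diagonal) satisfies M = M² = M*, has only even columns, and is not the Gram matrix of any binary Parseval frame. -/
/-!
Write `M = J - 1` with `J` the all-ones matrix. Since `J * J = k • J` and `k` is odd, `M` is a
symmetric idempotent with even columns over `ZMod 2`. If `M = Θ * Θᵀ` with `Θᵀ * Θ = 1`, then,
as `x * x = x` in `ZMod 2`, the zero diagonal of `M` says every row of `Θ` is even, i.e. `Θ`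
kills the all-ones vector `𝟙`. Then `𝟙 = Θᵀ * Θ *ᵥ 𝟙 = 0`, so the frame is empty and
`M = Θ * Θᵀ = 0`, which is absurd once `k ≥ 2`.
-/

open Matrix

namespace Matrix

variable {ι κ : Type*} [Fintype κ]

lemma mul_transpose_self_apply_diag_eq_sum (Θ : Matrix ι κ (ZMod 2)) (i : ι) :
    (Θ * Θᵀ) i i = ∑ j, Θ i j := by
  simp only [mul_apply, transpose_apply, ← sq, ZMod.pow_card]

lemma mulVec_one_eq_zero_of_diag_mul_transpose_eq_zero {Θ : Matrix ι κ (ZMod 2)}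
    (hdiag : ∀ i, (Θ * Θᵀ) i i = 0) : Θ *ᵥ 1 = 0 := by
  ext i
  simpa [mulVec, dotProduct, mul_transpose_self_apply_diag_eq_sum] using hdiag i

lemma isEmpty_of_transpose_mul_self_eq_one [Fintype ι] [DecidableEq κ] {Θ : Matrix ι κ (ZMod 2)}
    (hΘ : Θᵀ * Θ = 1) (hdiag : ∀ i, (Θ * Θᵀ) i i = 0) : IsEmpty κ := by
  have hones : (1 : κ → ZMod 2) = 0 := by
    rw [← one_mulVec (1 : κ → ZMod 2), ← hΘ, ← mulVec_mulVec,
      mulVec_one_eq_zero_of_diag_mul_transpose_eq_zero hdiag, mulVec_zero]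
  exact ⟨fun j => one_ne_zero (congrFun hones j)⟩

variable [Fintype ι]

lemma of_one_mul_of_one {R : Type*} [NonAssocSemiring R] :
    (of fun _ _ => 1 : Matrix ι ι R) * of (fun _ _ => 1) = Fintype.card ι • of fun _ _ => 1 := by
  ext i j
  simp [mul_apply]

variable [DecidableEq ι]

lemma of_one_sub_one_mul_self (hodd : (Fintype.card ι : ZMod 2) = 1) :
    (of (fun _ _ => 1) - 1 : Matrix ι ι (ZMod 2)) * (of (fun _ _ => 1) - 1) =
      of (fun _ _ => 1) - 1 := by
  rw [sub_mul, mul_sub, mul_sub, of_one_mul_of_one, ← Nat.cast_smul_eq_nsmul (ZMod 2), hodd,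
    one_smul, mul_one, one_mul, mul_one, sub_self, zero_sub]
  ext i j
  exact ZMod.neg_eq_self_mod_two _

lemma sum_of_one_sub_one_apply (hodd : (Fintype.card ι : ZMod 2) = 1) (j : ι) :
    ∑ i, (of (fun _ _ => 1) - 1 : Matrix ι ι (ZMod 2)) i j = 0 := by
  simp [one_apply, Finset.sum_sub_distrib, hodd]

end Matrix

/-- For odd k ≥ 3, the k×k binary matrix with zeros on the diagonal and ones
elsewhere is symmetric idempotent, has only even columns, and is not the Gram
matrix of any binary Parseval frame. -/
theorem ones_minus_identity_not_gram (k : ℕ) (hk : 3 ≤ k) (hodd : Odd k)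
    (M : Matrix (Fin k) (Fin k) (ZMod 2))
    (hM : ∀ i j : Fin k, M i j = if i = j then 0 else 1) :
    M = M * M ∧ M = Mᵀ ∧ (∀ j : Fin k, (∑ i : Fin k, M i j) = 0) ∧
      ¬ ∃ (n : ℕ) (Θ : Matrix (Fin k) (Fin n) (ZMod 2)),
          Θᵀ * Θ = 1 ∧ M = Θ * Θᵀ := by
  have hcard : (Fintype.card (Fin k) : ZMod 2) = 1 := by
    rwa [Fintype.card_fin, ZMod.natCast_eq_one_iff_odd]
  have hJ : M = of (fun _ _ => 1) - 1 := by
    ext i j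
    rw [hM]
    split_ifs with h <;> simp [h, one_apply]
  refine ⟨hJ ▸ (of_one_sub_one_mul_self hcard).symm, ?_, hJ ▸ sum_of_one_sub_one_apply hcard, ?_⟩
  · rw [hJ, transpose_sub, transpose_one]
    rfl
  rintro ⟨n, Θ, hParseval, hGram⟩
  have : IsEmpty (Fin n) :=
    isEmpty_of_transpose_mul_self_eq_one hParseval fun i => by rw [← hGram, hM, if_pos rfl]
  have h01 := hM ⟨0, by omega⟩ ⟨1, by omega⟩
  simp [hGram, mul_apply] at h01
end

section
/- A binary Parseval frame F = {f_1,...,f_k} for (ℤ/2)^n with n < k has a complementary (Naimark) Parseval frame if and only if at least one frame vector f_j is even. -/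
open Matrix

namespace NaimarkAux

lemma z2_mul_self : ∀ x : ZMod 2, x * x = x := by decide

lemma z2_add_self : ∀ x : ZMod 2, x + x = 0 := by decide

lemma z2_ne_add : ∀ x y : ZMod 2, x ≠ y → x + y = 1 := by decide

lemma z2_cases : ∀ x : ZMod 2, x = 0 ∨ x = 1 := by decide

lemma mat_add_self {m n : Type*} (M : Matrix m n (ZMod 2)) : M + M = 0 := by
  ext i j
  exact z2_add_self _

lemma mul_vecMulVec {k : ℕ} (M : Matrix (Fin k) (Fin k) (ZMod 2)) (v w : Fin k → ZMod 2) :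
    M * vecMulVec v w = vecMulVec (M *ᵥ v) w := by
  ext i j
  simp only [mul_apply, vecMulVec_apply, mulVec, dotProduct]
  rw [Finset.sum_mul]
  exact Finset.sum_congr rfl fun l _ => by ring

lemma vecMulVec_mul {k : ℕ} (v w : Fin k → ZMod 2) (M : Matrix (Fin k) (Fin k) (ZMod 2)) :
    vecMulVec v w * M = vecMulVec v (w ᵥ* M) := by
  ext i j
  simp only [mul_apply, vecMulVec_apply, vecMul, dotProduct]
  rw [Finset.mul_sum]
  exact Finset.sum_congr rfl fun l _ => by ring

lemma vecMulVec_mulVec {k : ℕ} (v w x : Fin k → ZMod 2) :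
    vecMulVec v w *ᵥ x = (w ⬝ᵥ x) • v := by
  ext i
  simp only [mulVec, vecMulVec_apply, dotProduct, Pi.smul_apply, smul_eq_mul]
  rw [Finset.sum_mul]
  exact Finset.sum_congr rfl fun l _ => by ring

lemma vecMul_vecMulVec {k : ℕ} (x v w : Fin k → ZMod 2) :
    x ᵥ* vecMulVec v w = (x ⬝ᵥ v) • w := by
  ext j
  simp only [vecMul, vecMulVec_apply, dotProduct, Pi.smul_apply, smul_eq_mul]
  rw [Finset.sum_mul]
  exact Finset.sum_congr rfl fun l _ => by ring

lemma transpose_vecMulVec {k : ℕ} (v w : Fin k → ZMod 2) :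
    (vecMulVec v w)ᵀ = vecMulVec w v := by
  ext i j
  simp [vecMulVec_apply, mul_comm]

/-- Key factorization lemma: a symmetric idempotent over `ZMod 2` of rank `r` with a
nonzero diagonal entry (or rank zero) factors as `A * Aᵀ` with `Aᵀ * A = 1`. -/
lemma factor (r : ℕ) : ∀ (k : ℕ) (Q : Matrix (Fin k) (Fin k) (ZMod 2)),
    Qᵀ = Q → Q * Q = Q → Q.rank = r → (r = 0 ∨ ∃ j, Q j j = 1) →
    ∃ A : Matrix (Fin k) (Fin r) (ZMod 2), Aᵀ * A = 1 ∧ A * Aᵀ = Q := by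
  induction r with
  | zero =>
    intro k Q hQT hQQ hrank _
    -- rank 0 implies Q = 0
    have hrange : LinearMap.range Q.mulVecLin = ⊥ := Submodule.finrank_eq_zero.1 hrank
    have hQ0 : Q = 0 := by
      ext i j
      have : Q.mulVecLin (Pi.single j 1) = 0 := by
        have := LinearMap.mem_range_self Q.mulVecLin (Pi.single j 1)
        rw [hrange] at this
        simpa using this
      have := congrFun this i
      simpa [Matrix.mulVecLin_apply, Matrix.mulVec_single] using this
    refine ⟨0, ?_, ?_⟩
    · ext a b; exact a.elim0
    · simp [hQ0]
  | succ r ih =>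
    intro k Q hQT hQQ hrank hdiag
    obtain ⟨j, hj⟩ : ∃ j, Q j j = 1 := by
      rcases hdiag with h | h
      · omega
      · exact h
    -- the column `v₀ := Q · e j` is an odd fixed vector of `Q`
    set v₀ : Fin k → ZMod 2 := fun i => Q i j with hv₀def
    have hsymm : ∀ a b, Q a b = Q b a := by
      intro a b
      have h := congrFun (congrFun hQT a) b
      rw [Matrix.transpose_apply] at h
      exact h.symm
    have hQv₀ : Q *ᵥ v₀ = v₀ := by
      ext i
      simpa [Matrix.mulVec, dotProduct, Matrix.mul_apply, hv₀def] using
        congrFun (congrFun hQQ i) j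
    have hodd₀ : v₀ ⬝ᵥ v₀ = 1 := by
      have h1 : (Q * Q) j j = Q j j := by rw [hQQ]
      have h2 : (Q * Q) j j = ∑ i, Q i j * Q i j := by
        rw [Matrix.mul_apply]
        exact Finset.sum_congr rfl fun i _ => by rw [hsymm j i]
      simp only [dotProduct, hv₀def]
      rw [← h2, h1, hj]
    -- fixed vectors are exactly the range of `Q.mulVecLin`
    have hfix_mem : ∀ w : Fin k → ZMod 2, Q *ᵥ w = w → w ∈ LinearMap.range Q.mulVecLin := by
      intro w hw
      exact ⟨w, by simpa [Matrix.mulVecLin_apply] using hw⟩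
    have hmem_fix : ∀ w : Fin k → ZMod 2, w ∈ LinearMap.range Q.mulVecLin → Q *ᵥ w = w := by
      rintro w ⟨x, rfl⟩
      simp only [Matrix.mulVecLin_apply]
      rw [Matrix.mulVec_mulVec, hQQ]
    -- choose a good odd fixed vector `v`
    obtain ⟨v, hQv, hodd, hvd⟩ :
        ∃ v : Fin k → ZMod 2, Q *ᵥ v = v ∧ v ⬝ᵥ v = 1 ∧
          (r = 0 ∨ ∃ i, Q i i ≠ v i) := by
      by_cases hr : r = 0
      · exact ⟨v₀, hQv₀, hodd₀, Or.inl hr⟩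
      by_cases hd : ∃ i, Q i i ≠ v₀ i
      · exact ⟨v₀, hQv₀, hodd₀, Or.inr hd⟩
      push_neg at hd
      have hv₀ne : v₀ ≠ 0 := by
        intro h0
        rw [h0] at hodd₀
        simp at hodd₀
      have hnotle : ¬ (LinearMap.range Q.mulVecLin ≤ Submodule.span (ZMod 2) {v₀}) := by
        intro hle
        have h1 : Module.finrank (ZMod 2) (LinearMap.range Q.mulVecLin) ≤
            Module.finrank (ZMod 2) (Submodule.span (ZMod 2) {v₀}) := Submodule.finrank_mono hle
        rw [finrank_span_singleton hv₀ne] at h1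
        have h2 : Module.finrank (ZMod 2) (LinearMap.range Q.mulVecLin) = r + 1 := hrank
        omega
      obtain ⟨u, huS, huL⟩ := SetLike.not_le_iff_exists.1 hnotle
      have hQu : Q *ᵥ u = u := hmem_fix u huS
      have hune0 : u ≠ 0 := by
        intro h; exact huL (h ▸ Submodule.zero_mem _)
      have hunev₀ : u ≠ v₀ := by
        intro h; rw [h] at huL
        exact huL (Submodule.mem_span_singleton_self v₀)
      rcases z2_cases (u ⬝ᵥ u) with hu0 | hu1
      · -- u even: use u + v₀
        refine ⟨u + v₀, ?_, ?_, Or.inr ?_⟩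
        · rw [Matrix.mulVec_add, hQu, hQv₀]
        · rw [dotProduct_add, add_dotProduct, add_dotProduct, hu0, hodd₀,
            dotProduct_comm v₀ u]
          rw [zero_add, ← add_assoc, z2_add_self, zero_add]
        · have hne : u + v₀ ≠ v₀ := by
            intro h
            apply hune0
            funext i
            have h1 := congrFun h i
            exact add_right_cancel ((h1 : u i + v₀ i = v₀ i).trans (zero_add (v₀ i)).symm)
          obtain ⟨i, hi⟩ := Function.ne_iff.1 hne
          exact ⟨i, by rw [hd i]; exact fun h => hi h.symm⟩
      · -- u odd: use u
        refine ⟨u, hQu, hu1, Or.inr ?_⟩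
        obtain ⟨i, hi⟩ := Function.ne_iff.1 hunev₀
        exact ⟨i, by rw [hd i]; exact fun h => hi h.symm⟩
    -- set up the deflated matrix Q' = Q + v vᵀ
    have hvne0 : v ≠ 0 := by
      intro h0
      rw [h0] at hodd
      simp at hodd
    have hvQ : v ᵥ* Q = v := by
      ext i
      have h1 : (v ᵥ* Q) i = (Q *ᵥ v) i := by
        simp only [Matrix.vecMul, Matrix.mulVec, dotProduct]
        exact Finset.sum_congr rfl fun l _ => by rw [hsymm i l, mul_comm]
      rw [h1, hQv]
    set V : Matrix (Fin k) (Fin k) (ZMod 2) := vecMulVec v v with hVdef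
    have hQV : Q * V = V := by rw [hVdef, mul_vecMulVec, hQv]
    have hVQ : V * Q = V := by rw [hVdef, vecMulVec_mul, hvQ]
    have hvV : v ᵥ* V = v := by
      rw [hVdef, vecMul_vecMulVec, hodd, one_smul]
    have hVv : V *ᵥ v = v := by
      rw [hVdef, vecMulVec_mulVec, hodd, one_smul]
    have hVV : V * V = V := by
      rw [hVdef, vecMulVec_mul]
      rw [← hVdef, hvV]
    set Q' : Matrix (Fin k) (Fin k) (ZMod 2) := Q + V with hQ'def
    have hQT' : Q'ᵀ = Q' := by
      rw [hQ'def, Matrix.transpose_add, hQT, hVdef, transpose_vecMulVec]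
    have hQ'Q' : Q' * Q' = Q' := by
      rw [hQ'def, add_mul, mul_add, mul_add, hQQ, hQV, hVQ, hVV]
      rw [add_assoc, ← add_assoc V V V, mat_add_self, zero_add]
    have hQ'v : Q' *ᵥ v = 0 := by
      rw [hQ'def, Matrix.add_mulVec, hQv, hVv]
      funext i
      exact z2_add_self (v i)
    have hQ'mul : ∀ x, Q' *ᵥ x = Q *ᵥ x + (v ⬝ᵥ x) • v := by
      intro x
      rw [hQ'def, Matrix.add_mulVec, hVdef, vecMulVec_mulVec]
    have hQQ' : Q * Q' = Q' := by rw [hQ'def, mul_add, hQQ, hQV]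
    -- range bookkeeping
    set S : Submodule (ZMod 2) (Fin k → ZMod 2) := LinearMap.range Q.mulVecLin with hSdef
    set S' : Submodule (ZMod 2) (Fin k → ZMod 2) := LinearMap.range Q'.mulVecLin with hS'def
    set L : Submodule (ZMod 2) (Fin k → ZMod 2) := Submodule.span (ZMod 2) {v} with hLdef
    have hS'le : S' ≤ S := by
      rintro _ ⟨x, rfl⟩
      refine ⟨Q' *ᵥ x, ?_⟩
      simp only [Matrix.mulVecLin_apply]
      rw [Matrix.mulVec_mulVec, hQQ']
    have hvS : v ∈ S := hfix_mem v hQv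
    have hvL : v ∈ L := Submodule.mem_span_singleton_self v
    have hSeq : S = S' ⊔ L := by
      apply le_antisymm
      · rintro _ ⟨x, rfl⟩
        have h1 : Q.mulVecLin x = Q' *ᵥ x + (v ⬝ᵥ x) • v := by
          rw [hQ'mul x]
          simp only [Matrix.mulVecLin_apply]
          rw [add_assoc, ← add_smul, z2_add_self, zero_smul, add_zero]
        rw [h1]
        exact Submodule.add_mem _ (Submodule.mem_sup_left ⟨x, rfl⟩)
          (Submodule.mem_sup_right (Submodule.smul_mem _ _ hvL))
      · exact sup_le hS'le ((Submodule.span_singleton_le_iff_mem v S).2 hvS)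
    have hvnotS' : v ∉ S' := by
      rintro ⟨x, hx⟩
      have h1 : Q' *ᵥ v = v := by
        conv_lhs => rw [← hx]
        simp only [Matrix.mulVecLin_apply]
        rw [Matrix.mulVec_mulVec, hQ'Q']
        exact hx
      rw [hQ'v] at h1
      exact hvne0 h1.symm
    have hinf : S' ⊓ L = ⊥ := by
      rw [eq_bot_iff]
      rintro x ⟨hx1, hx2⟩
      obtain ⟨a, rfl⟩ := Submodule.mem_span_singleton.1 hx2
      rcases z2_cases a with ha | ha
      · rw [ha, zero_smul]; exact Submodule.zero_mem _
      · rw [ha, one_smul] at hx1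
        exact absurd hx1 hvnotS'
    have hrank' : Q'.rank = r := by
      have hfd : Module.finrank (ZMod 2) ↥(S' ⊔ L) + Module.finrank (ZMod 2) ↥(S' ⊓ L) =
          Module.finrank (ZMod 2) ↥S' + Module.finrank (ZMod 2) ↥L :=
        Submodule.finrank_sup_add_finrank_inf_eq S' L
      rw [hinf, ← hSeq, finrank_bot, finrank_span_singleton hvne0] at hfd
      have hS : Module.finrank (ZMod 2) ↥S = r + 1 := hrank
      have hS' : Q'.rank = Module.finrank (ZMod 2) ↥S' := rfl
      omega
    have hdiag' : r = 0 ∨ ∃ i, Q' i i = 1 := by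
      rcases hvd with h | ⟨i, hi⟩
      · exact Or.inl h
      · refine Or.inr ⟨i, ?_⟩
        have : Q' i i = Q i i + v i * v i := by
          rw [hQ'def]
          simp [hVdef, Matrix.add_apply, vecMulVec_apply]
        rw [this, z2_mul_self]
        exact z2_ne_add _ _ hi
    obtain ⟨A', hA'1, hA'2⟩ := ih k Q' hQT' hQ'Q' hrank' hdiag'
    have hQ'A' : Q' * A' = A' := by
      conv_lhs => rw [← hA'2]
      rw [Matrix.mul_assoc, hA'1, Matrix.mul_one]
    have hvQ' : v ᵥ* Q' = 0 := by
      rw [hQ'def, Matrix.vecMul_add, hvQ, hvV]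
      funext i
      exact z2_add_self (v i)
    have hvA' : v ᵥ* A' = 0 := by
      rw [← hQ'A', ← Matrix.vecMul_vecMul, hvQ', Matrix.zero_vecMul]
    -- assemble A by appending the column v
    refine ⟨Matrix.of fun i => Fin.snoc (A' i) (v i), ?_, ?_⟩
    · ext a b
      rw [Matrix.mul_apply]
      simp only [Matrix.transpose_apply, Matrix.of_apply]
      refine Fin.lastCases ?_ ?_ a
      · refine Fin.lastCases ?_ ?_ b
        · simp only [Fin.snoc_last]
          rw [Matrix.one_apply_eq]
          exact hodd
        · intro b'
          simp only [Fin.snoc_last, Fin.snoc_castSucc]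
          rw [Matrix.one_apply_ne (Fin.castSucc_lt_last b').ne']
          simpa [Matrix.vecMul, dotProduct] using congrFun hvA' b'
      · intro a'
        refine Fin.lastCases ?_ ?_ b
        · simp only [Fin.snoc_last, Fin.snoc_castSucc]
          rw [Matrix.one_apply_ne (Fin.castSucc_lt_last a').ne]
          have h1 := congrFun hvA' a'
          simp only [Matrix.vecMul, dotProduct, Pi.zero_apply] at h1
          rw [← h1]
          exact Finset.sum_congr rfl fun i _ => mul_comm _ _
        · intro b'
          simp only [Fin.snoc_castSucc]
          have h1 := congrFun (congrFun hA'1 a') b'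
          rw [Matrix.mul_apply] at h1
          simp only [Matrix.transpose_apply] at h1
          rw [h1]
          by_cases hab : a' = b'
          · rw [hab, Matrix.one_apply_eq, Matrix.one_apply_eq]
          · rw [Matrix.one_apply_ne hab, Matrix.one_apply_ne
              (fun h => hab (Fin.castSucc_injective r h))]
    · ext i i'
      rw [Matrix.mul_apply, Fin.sum_univ_castSucc]
      simp only [Matrix.transpose_apply, Matrix.of_apply, Fin.snoc_castSucc, Fin.snoc_last]
      have h2 := congrFun (congrFun hA'2 i) i'
      rw [Matrix.mul_apply] at h2
      simp only [Matrix.transpose_apply] at h2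
      rw [h2, hQ'def]
      simp only [Matrix.add_apply, hVdef, vecMulVec_apply]
      rw [add_assoc, z2_add_self, add_zero]

end NaimarkAux

open NaimarkAux

/-- A binary (k,n) Parseval frame with n < k (rows of Θ are the frame vectors)
has a complementary Parseval frame iff at least one frame vector is even. -/
theorem naimark_complement_exists_iff_even_vector (k n : ℕ) (hn : n < k)
    (Θ : Matrix (Fin k) (Fin n) (ZMod 2)) (hΘ : Θᵀ * Θ = 1) :
    (∃ ΘG : Matrix (Fin k) (Fin (k - n)) (ZMod 2),
        ΘGᵀ * ΘG = 1 ∧ Θ * Θᵀ + ΘG * ΘGᵀ = 1) ↔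
      ∃ j : Fin k, (∑ i : Fin n, Θ j i) = 0 := by
  constructor
  · rintro ⟨G, hG1, hG2⟩
    by_contra hall
    push_neg at hall
    have hall1 : ∀ j : Fin k, (∑ i : Fin n, Θ j i) = 1 := by
      intro j
      rcases z2_cases (∑ i : Fin n, Θ j i) with h | h
      · exact absurd h (hall j)
      · exact h
    set u : Fin k → ZMod 2 := fun _ => 1 with hudef
    have hcolΘ : Θᵀ *ᵥ u = fun _ => 1 := by
      funext i
      have h1 : (Θᵀ * Θ) i i = 1 := by rw [hΘ, Matrix.one_apply_eq]
      rw [Matrix.mul_apply] at h1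
      simp only [Matrix.transpose_apply] at h1
      have h2 : ∑ j : Fin k, Θ j i * Θ j i = ∑ j : Fin k, Θ j i :=
        Finset.sum_congr rfl fun l _ => z2_mul_self _
      simp only [Matrix.mulVec, dotProduct, Matrix.transpose_apply, hudef, mul_one]
      rw [← h2, h1]
    have hrowΘ : Θ *ᵥ (fun _ => 1 : Fin n → ZMod 2) = u := by
      funext j
      simp only [Matrix.mulVec, dotProduct, mul_one, hudef]
      exact hall1 j
    have hcolG : Gᵀ *ᵥ u = fun _ => 1 := by
      funext i
      have h1 : (Gᵀ * G) i i = 1 := by rw [hG1, Matrix.one_apply_eq]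
      rw [Matrix.mul_apply] at h1
      simp only [Matrix.transpose_apply] at h1
      have h2 : ∑ j : Fin k, G j i * G j i = ∑ j : Fin k, G j i :=
        Finset.sum_congr rfl fun l _ => z2_mul_self _
      simp only [Matrix.mulVec, dotProduct, Matrix.transpose_apply, hudef, mul_one]
      rw [← h2, h1]
    have hid : (Θ * Θᵀ) *ᵥ u + (G * Gᵀ) *ᵥ u = u := by
      rw [← Matrix.add_mulVec, hG2, Matrix.one_mulVec]
    have hP : (Θ * Θᵀ) *ᵥ u = u := by
      rw [← Matrix.mulVec_mulVec, hcolΘ, hrowΘ]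
    have hX : (G * Gᵀ) *ᵥ u = G *ᵥ (fun _ => 1 : Fin (k - n) → ZMod 2) := by
      rw [← Matrix.mulVec_mulVec, hcolG]
    rw [hP, hX] at hid
    have hG0 : G *ᵥ (fun _ => 1 : Fin (k - n) → ZMod 2) = 0 := by
      funext i
      have h1 := congrFun hid i
      simp only [Pi.add_apply] at h1
      simp only [Pi.zero_apply]
      exact add_left_cancel (h1.trans (add_zero (u i)).symm)
    have hcontra : (fun _ => 1 : Fin (k - n) → ZMod 2) = 0 := by
      have h1 : (Gᵀ * G) *ᵥ (fun _ => 1 : Fin (k - n) → ZMod 2) = 0 := by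
        rw [← Matrix.mulVec_mulVec, hG0, Matrix.mulVec_zero]
      rw [hG1, Matrix.one_mulVec] at h1
      exact h1
    have hpos : 0 < k - n := by omega
    have := congrFun hcontra ⟨0, hpos⟩
    simp at this
  · rintro ⟨j, hj⟩
    set P : Matrix (Fin k) (Fin k) (ZMod 2) := Θ * Θᵀ with hPdef
    set Q : Matrix (Fin k) (Fin k) (ZMod 2) := 1 + P with hQdef
    have hPP : P * P = P := by
      rw [hPdef, Matrix.mul_assoc, ← Matrix.mul_assoc Θᵀ Θ Θᵀ, hΘ, Matrix.one_mul]
    have hPT : Pᵀ = P := by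
      rw [hPdef, Matrix.transpose_mul, Matrix.transpose_transpose]
    have hQT : Qᵀ = Q := by
      rw [hQdef, Matrix.transpose_add, Matrix.transpose_one, hPT]
    have hQQ : Q * Q = Q := by
      rw [hQdef, add_mul, mul_add, mul_add, Matrix.one_mul, Matrix.one_mul, Matrix.mul_one, hPP]
      rw [add_assoc, mat_add_self, add_zero]
    have hdiag : Q j j = 1 := by
      have h1 : P j j = ∑ i : Fin n, Θ j i := by
        rw [hPdef, Matrix.mul_apply]
        simp only [Matrix.transpose_apply]
        exact Finset.sum_congr rfl fun i _ => z2_mul_self _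
      rw [hQdef, Matrix.add_apply, Matrix.one_apply_eq, h1, hj, add_zero]
    -- rank computations
    have hrankP : P.rank = n := by
      apply le_antisymm
      · exact (Matrix.rank_mul_le_left Θ Θᵀ).trans (Matrix.rank_le_width Θ)
      · have h1 : Θᵀ * P * Θ = 1 := by
          rw [hPdef, ← Matrix.mul_assoc, Matrix.mul_assoc (Θᵀ * Θ) Θᵀ Θ]
          rw [Matrix.mul_assoc Θᵀ Θ (Θᵀ * Θ), hΘ, Matrix.mul_one, hΘ]
        have h2 : (Θᵀ * P * Θ).rank = n := by
          rw [h1, Matrix.rank_one, Fintype.card_fin]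
        calc n = (Θᵀ * P * Θ).rank := h2.symm
          _ ≤ (Θᵀ * P).rank := Matrix.rank_mul_le_left _ _
          _ ≤ P.rank := Matrix.rank_mul_le_right _ _
    have hPQ : P * Q = 0 := by
      rw [hQdef, mul_add, Matrix.mul_one, hPP, mat_add_self]
    have hrangeker : LinearMap.range Q.mulVecLin = LinearMap.ker P.mulVecLin := by
      apply le_antisymm
      · rintro _ ⟨x, rfl⟩
        simp only [LinearMap.mem_ker, Matrix.mulVecLin_apply]
        rw [Matrix.mulVec_mulVec, hPQ, Matrix.zero_mulVec]
      · intro x hx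
        simp only [LinearMap.mem_ker, Matrix.mulVecLin_apply] at hx
        refine ⟨x, ?_⟩
        simp only [Matrix.mulVecLin_apply]
        rw [hQdef, Matrix.add_mulVec, Matrix.one_mulVec, hx, add_zero]
    have hrankQ : Q.rank = k - n := by
      have hrn := LinearMap.finrank_range_add_finrank_ker P.mulVecLin
      have hdim : Module.finrank (ZMod 2) (Fin k → ZMod 2) = k := by
        rw [Module.finrank_pi, Fintype.card_fin]
      rw [hdim] at hrn
      have h1 : Module.finrank (ZMod 2) (LinearMap.range P.mulVecLin) = n := hrankP
      have h2 : Q.rank = Module.finrank (ZMod 2) (LinearMap.range Q.mulVecLin) := rfl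
      rw [h2, hrangeker]
      omega
    obtain ⟨A, hA1, hA2⟩ := factor (k - n) k Q hQT hQQ hrankQ (Or.inr ⟨j, hdiag⟩)
    refine ⟨A, hA1, ?_⟩
    rw [hA2, hQdef]
    rw [add_comm 1 P, ← add_assoc, mat_add_self, zero_add]
end

section
/- For odd k ≥ 3, the sequence of k copies of the vector 1 in ℤ/2 is a binary Parseval frame for (ℤ/2)^1, but it has no complementary Parseval frame. -/
open Matrix

/-- For odd k ≥ 3, the all-ones k×1 matrix is the analysis matrix of a binary
Parseval frame for (ℤ/2)^1 (k copies of the vector 1), but it admits no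
complementary Parseval frame. -/
theorem all_ones_frame_no_complement (k : ℕ) (hk : 3 ≤ k) (hodd : Odd k)
    (Θ : Matrix (Fin k) (Fin 1) (ZMod 2)) (hΘ : ∀ i j, Θ i j = 1) :
    Θᵀ * Θ = 1 ∧
      ¬ ∃ ΘG : Matrix (Fin k) (Fin (k - 1)) (ZMod 2),
          ΘGᵀ * ΘG = 1 ∧ Θ * Θᵀ + ΘG * ΘGᵀ = 1 := by
  have hk1 : (k : ZMod 2) = 1 := by
    have h := Nat.odd_iff.mp hodd
    calc (k : ZMod 2) = ((k % 2 : ℕ) : ZMod 2) := (ZMod.natCast_mod k 2).symm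
    _ = 1 := by rw [h]; norm_num
  have sq : ∀ x : ZMod 2, x * x = x := by decide
  constructor
  · ext j j'
    have hj : j = j' := Subsingleton.elim _ _
    subst hj
    simp [Matrix.mul_apply, Matrix.transpose_apply, hΘ, Matrix.one_apply,
      Finset.sum_const, hk1]
  · rintro ⟨ΘG, hP, hC⟩
    -- diagonal entries of ΘG * ΘGᵀ are zero
    have hdiag : ∀ i, ∑ a, ΘG i a = 0 := by
      intro i
      have h := congrFun (congrFun hC i) i
      have hΘΘ : (Θ * Θᵀ) i i = 1 := by
        simp [Matrix.mul_apply, Matrix.transpose_apply, hΘ]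
      have h1 : (ΘG * ΘGᵀ) i i = 0 := by
        have h' : (Θ * Θᵀ) i i + (ΘG * ΘGᵀ) i i = 1 := by
          simpa [Matrix.add_apply, Matrix.one_apply] using h
        rw [hΘΘ] at h'
        have this := h'
        have := add_eq_left.mp this
        exact this
      calc ∑ a, ΘG i a = ∑ a, ΘG i a * ΘG i a := by simp [sq]
      _ = (ΘG * ΘGᵀ) i i := by simp [Matrix.mul_apply, Matrix.transpose_apply]
      _ = 0 := h1
    set v : Fin (k - 1) → ZMod 2 := fun _ => 1 with hv
    have h0 : ΘG *ᵥ v = 0 := by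
      funext i
      simp [Matrix.mulVec, dotProduct, v, hdiag i]
    have hc : v = 0 := by
      have : (ΘGᵀ * ΘG) *ᵥ v = v := by rw [hP, Matrix.one_mulVec]
      rw [← Matrix.mulVec_mulVec, h0, Matrix.mulVec_zero] at this
      exact this.symm
    have := congrFun hc (⟨0, by omega⟩ : Fin (k - 1))
    simp [v] at this
end

section
/- Two binary (k,n) Parseval frames F and G are switching equivalent if and only if their Gram matrices are related by conjugation with a k×k permutation matrix: G_F = P G_G P*. -/
/-!
Write `A`, `B` for the analysis matrices of `F`, `G` and `P` for the permutation matrix of `π`.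
Switching equivalence says `A = P B Uᵀ` with `U` orthogonal, and then `A Aᵀ = P (B Bᵀ) Pᵀ`.
Conversely, if the Gram matrices are conjugate, the Parseval identities `Aᵀ A = 1 = Bᵀ B` make
`U = Aᵀ P B` an orthogonal matrix with `A = P B Uᵀ`.
-/

open Matrix

namespace Matrix

variable {R : Type*} [CommSemiring R] {k l m n : Type*}

theorem transpose_permMatrix_mul_self [Fintype k] [DecidableEq k] (σ : Equiv.Perm k) :
    (σ.permMatrix R)ᵀ * σ.permMatrix R = 1 := by
  rw [transpose_permMatrix, ← permMatrix_mul, mul_inv_cancel, permMatrix_one]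

theorem of_eq_permMatrix_mul_mul_transpose_iff [Fintype l] [DecidableEq l] [Fintype m]
    (F : l → n → R) (G : l → m → R) (U : Matrix n m R) (π : Equiv.Perm l) :
    of F = π.permMatrix R * of G * Uᵀ ↔ ∀ j, F j = U *ᵥ G (π j) := by
  rw [Equiv.Perm.permMatrix, PEquiv.toMatrix_toPEquiv_mul]
  refine funext_iff.trans (forall_congr' fun j => ?_)
  rw [mul_apply_eq_vecMul, vecMul_transpose]
  rfl

theorem mul_mul_transpose_mul_transpose_eq [Fintype l] [Fintype m] [DecidableEq m] [Fintype n]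
    (P : Matrix k l R) (B : Matrix l m R) (U : Matrix n m R) (hU : Uᵀ * U = 1) :
    P * B * Uᵀ * (P * B * Uᵀ)ᵀ = P * (B * Bᵀ) * Pᵀ := by
  simp only [transpose_mul, transpose_transpose, Matrix.mul_assoc]
  rw [← Matrix.mul_assoc Uᵀ, hU, Matrix.one_mul]

theorem exists_orthogonal_eq_mul_mul_transpose_of_mul_transpose_eq [Fintype k] [Fintype l]
    [DecidableEq l] [Fintype m] [DecidableEq m] [Fintype n] [DecidableEq n]
    {A : Matrix k n R} {B : Matrix l m R} {P : Matrix k l R}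
    (hA : Aᵀ * A = 1) (hB : Bᵀ * B = 1) (hP : Pᵀ * P = 1) (h : A * Aᵀ = P * (B * Bᵀ) * Pᵀ) :
    ∃ U : Matrix n m R, U * Uᵀ = 1 ∧ Uᵀ * U = 1 ∧ A = P * B * Uᵀ := by
  refine ⟨Aᵀ * P * B, ?_, ?_, ?_⟩
  · calc Aᵀ * P * B * (Aᵀ * P * B)ᵀ = Aᵀ * (P * (B * Bᵀ) * Pᵀ) * A := by
          simp only [transpose_mul, transpose_transpose, Matrix.mul_assoc]
      _ = (Aᵀ * A) * (Aᵀ * A) := by rw [← h]; simp only [Matrix.mul_assoc]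
      _ = 1 := by rw [hA, Matrix.one_mul]
  · calc (Aᵀ * P * B)ᵀ * (Aᵀ * P * B) = Bᵀ * Pᵀ * (A * Aᵀ) * P * B := by
          simp only [transpose_mul, transpose_transpose, Matrix.mul_assoc]
      _ = Bᵀ * (Pᵀ * P) * B * Bᵀ * (Pᵀ * P) * B := by rw [h]; simp only [Matrix.mul_assoc]
      _ = 1 := by rw [hP, Matrix.mul_one, Matrix.mul_one, hB, Matrix.one_mul, hB]
  · calc A = (A * Aᵀ) * A := by rw [Matrix.mul_assoc, hA, Matrix.mul_one]
      _ = P * B * (Aᵀ * P * B)ᵀ := by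
          rw [h]; simp only [transpose_mul, transpose_transpose, Matrix.mul_assoc]

end Matrix

/-- Two binary (k,n) Parseval frames (given as the rows of their analysis
matrices) are switching equivalent iff their Gram matrices are conjugate by a
permutation matrix. -/
theorem switching_equiv_iff_gram_conjugate (k n : ℕ)
    (F G : Fin k → Fin n → ZMod 2)
    (hF : (Matrix.of F)ᵀ * Matrix.of F = 1)
    (hG : (Matrix.of G)ᵀ * Matrix.of G = 1) :
    (∃ (U : Matrix (Fin n) (Fin n) (ZMod 2)) (π : Equiv.Perm (Fin k)),
        U * Uᵀ = 1 ∧ Uᵀ * U = 1 ∧ ∀ j : Fin k, F j = U.mulVec (G (π j))) ↔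
      (∃ σ : Equiv.Perm (Fin k),
        Matrix.of F * (Matrix.of F)ᵀ =
          σ.permMatrix (ZMod 2) * (Matrix.of G * (Matrix.of G)ᵀ) *
            (σ.permMatrix (ZMod 2))ᵀ) := by
  constructor
  · rintro ⟨U, π, -, hU, hFG⟩
    refine ⟨π, ?_⟩
    rw [(of_eq_permMatrix_mul_mul_transpose_iff F G U π).2 hFG]
    exact mul_mul_transpose_mul_transpose_eq _ _ U hU
  · rintro ⟨σ, hgram⟩
    obtain ⟨U, hUUt, hUtU, hFG⟩ := exists_orthogonal_eq_mul_mul_transpose_of_mul_transpose_eq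
      hF hG (transpose_permMatrix_mul_self σ) hgram
    exact ⟨U, σ, hUUt, hUtU, (of_eq_permMatrix_mul_mul_transpose_iff F G U σ).1 hFG⟩
end

section
/- If U_1 and U_2 are permutation equivalent binary orthogonal k×k matrices, then every (k,n)-frame formed by a sequence of n columns of U_1 (as rows of its analysis matrix) is switching equivalent to a (k,n)-frame formed from n columns of U_2. -/
open Matrix

/-- If U₁ and U₂ are permutation-equivalent binary orthogonal matrices, then
every (k,n)-frame formed from n distinct columns of U₁ is switching equivalent
(Gram matrices conjugate by a permutation matrix) to a (k,n)-frame formed from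
n distinct columns of U₂. -/
theorem perm_equiv_orthogonal_frames_switching_equiv (k n : ℕ)
    (U₁ U₂ : Matrix (Fin k) (Fin k) (ZMod 2))
    (hU₁ : U₁ * U₁ᵀ = 1 ∧ U₁ᵀ * U₁ = 1)
    (hU₂ : U₂ * U₂ᵀ = 1 ∧ U₂ᵀ * U₂ = 1)
    (P₁ P₂ : Equiv.Perm (Fin k))
    (hperm : U₁ = P₁.permMatrix (ZMod 2) * U₂ * (P₂.permMatrix (ZMod 2))ᵀ)
    (c : Fin n → Fin k) (hc : Function.Injective c) :
    ∃ c' : Fin n → Fin k, Function.Injective c' ∧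
      ∃ σ : Equiv.Perm (Fin k),
        (Matrix.of fun i j => U₁ i (c j)) * (Matrix.of fun i j => U₁ i (c j))ᵀ =
          σ.permMatrix (ZMod 2) *
            ((Matrix.of fun i j => U₂ i (c' j)) *
              (Matrix.of fun i j => U₂ i (c' j))ᵀ) *
            (σ.permMatrix (ZMod 2))ᵀ := by
  have key : ∀ i j, U₁ i j = U₂ (P₁ i) (P₂ j) := by
    intro i j
    have ht : (P₂.permMatrix (ZMod 2))ᵀ = Equiv.Perm.permMatrix (ZMod 2) P₂.symm := by
      show (P₂.toPEquiv.toMatrix)ᵀ = (P₂.symm).toPEquiv.toMatrix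
      rw [Equiv.toPEquiv_symm, PEquiv.toMatrix_symm]
    rw [hperm, ht, PEquiv.mul_toMatrix_toPEquiv, PEquiv.toMatrix_toPEquiv_mul]
    simp
  refine ⟨fun j => P₂ (c j), fun a b hab => hc (P₂.injective hab), P₁, ?_⟩
  have hΘ : (Matrix.of fun i j => U₁ i (c j)) =
      P₁.permMatrix (ZMod 2) * (Matrix.of fun i j => U₂ i (P₂ (c j))) := by
    rw [PEquiv.toMatrix_toPEquiv_mul]
    ext i j
    exact key i (c j)
  rw [hΘ, transpose_mul]
  simp only [Matrix.mul_assoc]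
end
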